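/- Let c > 0, δ ≥ 0, T > 0 and n₁, n₂, n₃ be natural numbers. Let 𝐌 (real n₂×n₂) and G (real n₃×n₃) be symmetric positive definite matrices, and let B (n₂×n₁), E (n₂×n₃), S (n₁×n₁), F (n₁×n₃) be arbitrary real matrices. Let N : [0,T] → (real n₁×n₁ matrices) be continuous with N(t) invertible for every t ∈ [0,T], let Φ : [0,T] → ℝ^{n₁} be continuous, and let Γ : [0,T] → ℝ^{n₂} be continuously differentiable. Then for every Ψ⁰, Ψ¹ ∈ ℝ^{n₁} there exists a unique triple (Ψ, V, Λ) with Ψ ∈ C²([0,T]; ℝ^{n₁}), V ∈ C¹([0,T]; ℝ^{n₂}), Λ ∈ C¹([0,T]; ℝ^{n₃}) such that for all t ∈ [0,T]: 𝐌 V(t) + B Ψ(t) + E Λ(t) = Γ(t); N(t) Ψ''(t) − c² Bᵀ (V(t) + (δ/c²) V'(t)) + c² S (Ψ(t) + (δ/c²) Ψ'(t)) + c² F (Λ(t) + (δ/c²) Λ'(t)) = Φ(t); −Eᵀ V(t) + Fᵀ Ψ(t) + G Λ(t) = 0; and Ψ(0) = Ψ⁰, Ψ'(0) = Ψ¹. 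-/

import Mathlib

/-!
Since `𝐌` and `G` are positive definite, the block operator `(v, λ) ↦ (𝐌 v + E λ, -Eᵀ v + G λ)`
is injective (in its quadratic form the two `E`-blocks cancel, leaving `v ⬝ 𝐌 v + λ ⬝ G λ`), hence
invertible. So the first and third equations give `(V, Λ)` as a fixed linear function of `(Ψ, Γ)`.
Substituting this into the second equation and multiplying by `N(t)⁻¹` leaves a linear
second-order equation `Ψ'' = A₀(t) Ψ + A₁(t) Ψ' + f(t)` with coefficients continuous on `[0, T]`.
Written as a first-order system it has a globally Lipschitz right-hand side, so it has a solution
(Picard–Lindelöf on pieces of length at most `1 / (2K)`, glued together) and only one (Grönwall).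
-/

open Set Matrix

noncomputable section

/-- The triple `(Ψ, V, Λ)` solves, on `[0,T]`, the ODE system coming from the linearized
semidiscrete HDG formulation, with the prescribed initial conditions. -/
def SolvesHDGODE (c δ T : ℝ) {n₁ n₂ n₃ : ℕ}
    (Mm : Matrix (Fin n₂) (Fin n₂) ℝ) (G : Matrix (Fin n₃) (Fin n₃) ℝ)
    (B : Matrix (Fin n₂) (Fin n₁) ℝ) (E : Matrix (Fin n₂) (Fin n₃) ℝ)
    (S : Matrix (Fin n₁) (Fin n₁) ℝ) (F : Matrix (Fin n₁) (Fin n₃) ℝ)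
    (N : ℝ → Matrix (Fin n₁) (Fin n₁) ℝ)
    (Φ : ℝ → Fin n₁ → ℝ) (Γ : ℝ → Fin n₂ → ℝ)
    (Ψ0 Ψ1 : Fin n₁ → ℝ)
    (Ψ : ℝ → Fin n₁ → ℝ) (V : ℝ → Fin n₂ → ℝ) (Λ : ℝ → Fin n₃ → ℝ) : Prop :=
  ContDiffOn ℝ 2 Ψ (Icc 0 T) ∧ ContDiffOn ℝ 1 V (Icc 0 T) ∧ ContDiffOn ℝ 1 Λ (Icc 0 T) ∧
  (∀ t ∈ Icc (0:ℝ) T,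
    Mm.mulVec (V t) + B.mulVec (Ψ t) + E.mulVec (Λ t) = Γ t ∧
    (N t).mulVec (derivWithin (derivWithin Ψ (Icc 0 T)) (Icc 0 T) t)
        - c^2 • Bᵀ.mulVec (V t + (δ/c^2) • derivWithin V (Icc 0 T) t)
        + c^2 • S.mulVec (Ψ t + (δ/c^2) • derivWithin Ψ (Icc 0 T) t)
        + c^2 • F.mulVec (Λ t + (δ/c^2) • derivWithin Λ (Icc 0 T) t) = Φ t ∧
    -(Eᵀ.mulVec (V t)) + Fᵀ.mulVec (Ψ t) + G.mulVec (Λ t) = 0) ∧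
  Ψ 0 = Ψ0 ∧ derivWithin Ψ (Icc 0 T) 0 = Ψ1

open scoped NNReal

section LipschitzODE

variable {E : Type*} [NormedAddCommGroup E] [NormedSpace ℝ E]
  {v : ℝ → E → E} {a b c : ℝ} {K : ℝ≥0}

theorem hasDerivWithinAt_Icc_ite {f g : ℝ → E}
    (hf : ∀ t ∈ Icc a c, HasDerivWithinAt f (v t (f t)) (Icc a c) t)
    (hg : ∀ t ∈ Icc c b, HasDerivWithinAt g (v t (g t)) (Icc c b) t) (hfg : f c = g c) :
    ∀ t ∈ Icc a b, HasDerivWithinAt (fun s ↦ if s ≤ c then f s else g s)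
      (v t (if t ≤ c then f t else g t)) (Icc a b) t := by
  set h : ℝ → E := fun s ↦ if s ≤ c then f s else g s
  have hhf : ∀ s ∈ Icc a c, h s = f s := fun s hs ↦ if_pos hs.2
  have hhg : ∀ s ∈ Icc c b, h s = g s := fun s hs ↦ by
    rcases hs.1.eq_or_lt with rfl | hlt
    · exact (if_pos le_rfl).trans hfg
    · exact if_neg hlt.not_ge
  intro t ht
  have hleft : HasDerivWithinAt h (v t (h t)) (Icc a c) t := by
    by_cases htc : t ≤ c
    · rw [hhf t ⟨ht.1, htc⟩]
      exact (hf t ⟨ht.1, htc⟩).congr_of_mem hhf ⟨ht.1, htc⟩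
    · refine HasFDerivWithinAt.of_notMem_closure ?_
      rw [closure_Icc]
      exact fun hmem ↦ htc hmem.2
  have hright : HasDerivWithinAt h (v t (h t)) (Icc c b) t := by
    by_cases hct : c ≤ t
    · rw [hhg t ⟨hct, ht.2⟩]
      exact (hg t ⟨hct, ht.2⟩).congr_of_mem hhg ⟨hct, ht.2⟩
    · refine HasFDerivWithinAt.of_notMem_closure ?_
      rw [closure_Icc]
      exact fun hmem ↦ hct hmem.1
  refine (hleft.union hright).mono fun s hs ↦ ?_
  by_cases hsc : s ≤ c
  exacts [Or.inl ⟨hs.1, hsc⟩, Or.inr ⟨le_of_not_ge hsc, hs.2⟩]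

theorem eqOn_Icc_of_hasDerivWithinAt_of_lipschitzWith {f g : ℝ → E}
    (hlip : ∀ t ∈ Icc a b, LipschitzWith K (v t))
    (hf : ∀ t ∈ Icc a b, HasDerivWithinAt f (v t (f t)) (Icc a b) t)
    (hg : ∀ t ∈ Icc a b, HasDerivWithinAt g (v t (g t)) (Icc a b) t) (ha : f a = g a) :
    EqOn f g (Icc a b) :=
  ODE_solution_unique_of_mem_Icc_right (s := fun _ ↦ univ)
    (fun t ht ↦ (hlip t (Ico_subset_Icc_self ht)).lipschitzOnWith)
    (HasDerivWithinAt.continuousOn hf)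
    (fun t ht ↦ (hf t (Ico_subset_Icc_self ht)).mono_of_mem_nhdsWithin (Icc_mem_nhdsGE_of_mem ht))
    (fun _ _ ↦ mem_univ _) (HasDerivWithinAt.continuousOn hg)
    (fun t ht ↦ (hg t (Ico_subset_Icc_self ht)).mono_of_mem_nhdsWithin (Icc_mem_nhdsGE_of_mem ht))
    (fun _ _ ↦ mem_univ _) ha

variable [CompleteSpace E]

theorem exists_hasDerivWithinAt_Icc_of_lipschitzWith_of_mul_le (hab : a ≤ b)
    (hlip : ∀ t ∈ Icc a b, LipschitzWith K (v t)) (hcont : ∀ x, ContinuousOn (v · x) (Icc a b))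
    (hsmall : K * (b - a) ≤ 1 / 2) (x₀ : E) :
    ∃ α : ℝ → E, α a = x₀ ∧ ∀ t ∈ Icc a b, HasDerivWithinAt α (v t (α t)) (Icc a b) t := by
  obtain ⟨m, hm⟩ := isCompact_Icc.exists_bound_of_continuousOn (hcont x₀)
  have hm0 : 0 ≤ m := (norm_nonneg _).trans (hm a ⟨le_rfl, hab⟩)
  -- the radius `R` satisfies `(m + K R) (b - a) ≤ R` because `K (b - a) ≤ 1 / 2`
  set R : ℝ := 2 * m * (b - a)
  have hR : 0 ≤ R := by have := sub_nonneg.2 hab; positivity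
  have hpl : IsPicardLindelof v (⟨a, le_rfl, hab⟩ : Icc a b) x₀ ⟨R, hR⟩ 0
      ⟨m + K * R, by positivity⟩ K :=
    { lipschitzOnWith := fun t ht ↦ (hlip t ht).lipschitzOnWith
      continuousOn := fun x _ ↦ hcont x
      norm_le := fun t ht x hx ↦ by
        calc ‖v t x‖ ≤ ‖v t x₀‖ + ‖v t x - v t x₀‖ := norm_le_insert' _ _
          _ ≤ m + K * R := by
            rw [← dist_eq_norm]
            exact add_le_add (hm t ht) (((hlip t ht).dist_le_mul x x₀).trans (by gcongr; exact hx))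
      mul_max_le := by
        show (m + K * R) * max (b - a) (a - a) ≤ R - 0
        rw [max_eq_left (by linarith), sub_zero]
        nlinarith [sub_nonneg.2 hab] }
  exact hpl.exists_eq_forall_mem_Icc_hasDerivWithinAt₀

theorem exists_hasDerivWithinAt_Icc_of_lipschitzWith
    (hlip : ∀ t ∈ Icc a b, LipschitzWith K (v t)) (hcont : ∀ x, ContinuousOn (v · x) (Icc a b))
    (x₀ : E) :
    ∃ α : ℝ → E, α a = x₀ ∧ ∀ t ∈ Icc a b, HasDerivWithinAt α (v t (α t)) (Icc a b) t := by
  rcases lt_or_ge b a with hba | hab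
  · exact ⟨fun _ ↦ x₀, rfl, fun t ht ↦ absurd (ht.1.trans ht.2) hba.not_ge⟩
  -- glue `n` local solutions on pieces of length at most `1 / (2K)`
  suffices key : ∀ n : ℕ, ∀ b, a ≤ b → K * (b - a) ≤ n / 2 →
      (∀ t ∈ Icc a b, LipschitzWith K (v t)) → (∀ x, ContinuousOn (v · x) (Icc a b)) →
      ∃ α : ℝ → E, α a = x₀ ∧ ∀ t ∈ Icc a b, HasDerivWithinAt α (v t (α t)) (Icc a b) t by
    obtain ⟨n, hn⟩ := exists_nat_ge (2 * (K * (b - a)))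
    exact key n b hab (by linarith) hlip hcont
  intro n
  induction n with
  | zero =>
    intro b hab hsmall hlip hcont
    exact exists_hasDerivWithinAt_Icc_of_lipschitzWith_of_mul_le hab hlip hcont
      (by simp at hsmall; linarith) x₀
  | succ n ih =>
    intro b hab hsmall hlip hcont
    set c := a + (b - a) * (n / (n + 1)) with hc
    have hca : c - a = (b - a) * n / (n + 1) := by rw [hc]; ring
    have hbc : b - c = (b - a) / (n + 1) := by rw [hc]; field_simp; ring
    have hac : a ≤ c := sub_nonneg.1 (hca ▸ by have := sub_nonneg.2 hab; positivity)
    have hcb : c ≤ b := sub_nonneg.1 (hbc ▸ by have := sub_nonneg.2 hab; positivity)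
    have hleft : Icc a c ⊆ Icc a b := Icc_subset_Icc_right hcb
    have hright : Icc c b ⊆ Icc a b := Icc_subset_Icc_left hac
    obtain ⟨α, hα0, hα⟩ := ih c hac (by
        rw [hca, mul_div_assoc', div_le_iff₀ (by positivity)]
        push_cast at hsmall
        nlinarith [n.cast_nonneg (α := ℝ)])
      (fun t ht ↦ hlip t (hleft ht)) (fun x ↦ (hcont x).mono hleft)
    obtain ⟨β, hβ0, hβ⟩ := exists_hasDerivWithinAt_Icc_of_lipschitzWith_of_mul_le hcb
      (fun t ht ↦ hlip t (hright ht)) (fun x ↦ (hcont x).mono hright) (by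
        rw [hbc, mul_div_assoc', div_le_iff₀ (by positivity)]
        push_cast at hsmall
        linarith) (α c)
    exact ⟨_, by simp [hac, hα0], hasDerivWithinAt_Icc_ite hα hβ hβ0.symm⟩

end LipschitzODE

section LinearODE

variable {E : Type*} [NormedAddCommGroup E] [NormedSpace ℝ E]
  {A : ℝ → E →L[ℝ] E} {g : ℝ → E} {a b : ℝ}

theorem exists_lipschitzWith_clm_apply_add (hA : ContinuousOn A (Icc a b)) :
    ∃ K : ℝ≥0, ∀ t ∈ Icc a b, LipschitzWith K (fun x ↦ A t x + g t) := by
  obtain ⟨C, hC⟩ := isCompact_Icc.exists_bound_of_continuousOn hA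
  refine ⟨C.toNNReal, fun t ht ↦ LipschitzWith.of_dist_le_mul fun x y ↦ ?_⟩
  rw [dist_add_right]
  calc dist (A t x) (A t y) ≤ ‖A t‖ * dist x y := by
        simpa using (A t).lipschitz.dist_le_mul x y
    _ ≤ C.toNNReal * dist x y := by
        gcongr
        exact (hC t ht).trans (Real.le_coe_toNNReal C)

theorem eqOn_Icc_of_hasDerivWithinAt_clm_apply_add {f₁ f₂ : ℝ → E} (hA : ContinuousOn A (Icc a b))
    (hf₁ : ∀ t ∈ Icc a b, HasDerivWithinAt f₁ (A t (f₁ t) + g t) (Icc a b) t)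
    (hf₂ : ∀ t ∈ Icc a b, HasDerivWithinAt f₂ (A t (f₂ t) + g t) (Icc a b) t) (ha : f₁ a = f₂ a) :
    EqOn f₁ f₂ (Icc a b) :=
  let ⟨_, hK⟩ := exists_lipschitzWith_clm_apply_add (g := g) hA
  eqOn_Icc_of_hasDerivWithinAt_of_lipschitzWith hK hf₁ hf₂ ha

theorem exists_hasDerivWithinAt_Icc_clm_apply_add [CompleteSpace E] (hA : ContinuousOn A (Icc a b))
    (hg : ContinuousOn g (Icc a b)) (x₀ : E) :
    ∃ α : ℝ → E, α a = x₀ ∧ ∀ t ∈ Icc a b, HasDerivWithinAt α (A t (α t) + g t) (Icc a b) t :=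
  let ⟨_, hK⟩ := exists_lipschitzWith_clm_apply_add (g := g) hA
  exists_hasDerivWithinAt_Icc_of_lipschitzWith hK
    (fun _ ↦ (hA.clm_apply continuousOn_const).add hg) x₀

end LinearODE

section SecondOrderLinearODE

variable {X : Type*} [NormedAddCommGroup X] [NormedSpace ℝ X]

def companionOp (A₀ A₁ : X →L[ℝ] X) : X × X →L[ℝ] X × X :=
  (ContinuousLinearMap.inl ℝ X X).comp (ContinuousLinearMap.snd ℝ X X) +
    (ContinuousLinearMap.inr ℝ X X).comp
      (A₀.comp (ContinuousLinearMap.fst ℝ X X) + A₁.comp (ContinuousLinearMap.snd ℝ X X))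

@[simp]
lemma companionOp_apply (A₀ A₁ : X →L[ℝ] X) (p : X × X) :
    companionOp A₀ A₁ p = (p.2, A₀ p.1 + A₁ p.2) := by
  simp [companionOp]

lemma ContinuousOn.companionOp {A₀ A₁ : ℝ → X →L[ℝ] X} {s : Set ℝ} (hA₀ : ContinuousOn A₀ s)
    (hA₁ : ContinuousOn A₁ s) : ContinuousOn (fun t ↦ _root_.companionOp (A₀ t) (A₁ t)) s :=
  continuousOn_const.add <| continuousOn_const.clm_comp <|
    (hA₀.clm_comp continuousOn_const).add (hA₁.clm_comp continuousOn_const)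

variable {A₀ A₁ : ℝ → X →L[ℝ] X} {f : ℝ → X} {a b : ℝ}

theorem hasDerivWithinAt_companionOp_of_derivWithin_derivWithin (hab : a < b) {u : ℝ → X}
    (hu : ContDiffOn ℝ 2 u (Icc a b))
    (hu'' : ∀ t ∈ Icc a b, derivWithin (derivWithin u (Icc a b)) (Icc a b) t =
      A₀ t (u t) + A₁ t (derivWithin u (Icc a b) t) + f t) :
    ∀ t ∈ Icc a b, HasDerivWithinAt (fun t ↦ (u t, derivWithin u (Icc a b) t))
      (companionOp (A₀ t) (A₁ t) (u t, derivWithin u (Icc a b) t) + (0, f t)) (Icc a b) t := by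
  intro t ht
  have hu' : ContDiffOn ℝ 1 (derivWithin u (Icc a b)) (Icc a b) :=
    hu.derivWithin (uniqueDiffOn_Icc hab) (by norm_num)
  simp only [companionOp_apply, Prod.mk_add_mk, add_zero]
  rw [← hu'' t ht]
  exact ((hu.differentiableOn (by norm_num)) t ht).hasDerivWithinAt.prodMk
    ((hu'.differentiableOn one_ne_zero) t ht).hasDerivWithinAt

theorem contDiffOn_fst_of_hasDerivWithinAt_companionOp (hab : a < b)
    (hA₀ : ContinuousOn A₀ (Icc a b)) (hA₁ : ContinuousOn A₁ (Icc a b))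
    (hf : ContinuousOn f (Icc a b)) {α : ℝ → X × X}
    (hα : ∀ t ∈ Icc a b,
      HasDerivWithinAt α (companionOp (A₀ t) (A₁ t) (α t) + (0, f t)) (Icc a b) t) :
    ContDiffOn ℝ 2 (fun t ↦ (α t).1) (Icc a b) ∧
      (∀ t ∈ Icc a b, derivWithin (fun t ↦ (α t).1) (Icc a b) t = (α t).2) ∧
      ∀ t ∈ Icc a b, derivWithin (derivWithin (fun t ↦ (α t).1) (Icc a b)) (Icc a b) t =
        A₀ t (α t).1 + A₁ t (derivWithin (fun t ↦ (α t).1) (Icc a b) t) + f t := by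
  have hs := uniqueDiffOn_Icc hab
  have hα' : ∀ t ∈ Icc a b,
      HasDerivWithinAt α ((α t).2, A₀ t (α t).1 + A₁ t (α t).2 + f t) (Icc a b) t :=
    fun t ht ↦ by simpa using hα t ht
  have hfst : ∀ t ∈ Icc a b, HasDerivWithinAt (fun t ↦ (α t).1) (α t).2 (Icc a b) t :=
    fun t ht ↦ (ContinuousLinearMap.fst ℝ X X).hasFDerivAt.comp_hasDerivWithinAt t (hα' t ht)
  have hsnd : ∀ t ∈ Icc a b, HasDerivWithinAt (fun t ↦ (α t).2)
      (A₀ t (α t).1 + A₁ t (α t).2 + f t) (Icc a b) t :=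
    fun t ht ↦ (ContinuousLinearMap.snd ℝ X X).hasFDerivAt.comp_hasDerivWithinAt t (hα' t ht)
  have hd : ∀ t ∈ Icc a b, derivWithin (fun t ↦ (α t).1) (Icc a b) t = (α t).2 :=
    fun t ht ↦ (hfst t ht).derivWithin (hs t ht)
  have hαc : ContinuousOn α (Icc a b) := HasDerivWithinAt.continuousOn hα'
  have hC1 : ContDiffOn ℝ 1 (fun t ↦ (α t).2) (Icc a b) := by
    rw [contDiffOn_one_iff_derivWithin hs]
    refine ⟨fun t ht ↦ (hsnd t ht).differentiableWithinAt, ?_⟩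
    exact (((hA₀.clm_apply hαc.fst).add (hA₁.clm_apply hαc.snd)).add hf).congr
      fun t ht ↦ (hsnd t ht).derivWithin (hs t ht)
  refine ⟨?_, hd, fun t ht ↦ ?_⟩
  · rw [show (2 : WithTop ℕ∞) = 1 + 1 from rfl, contDiffOn_succ_iff_derivWithin hs]
    exact ⟨fun t ht ↦ (hfst t ht).differentiableWithinAt, by simp, hC1.congr hd⟩
  · rw [derivWithin_congr hd (hd t ht), hd t ht]
    exact (hsnd t ht).derivWithin (hs t ht)

theorem eqOn_of_derivWithin_derivWithin_eq (hab : a < b) (hA₀ : ContinuousOn A₀ (Icc a b))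
    (hA₁ : ContinuousOn A₁ (Icc a b)) {u v : ℝ → X}
    (hu : ContDiffOn ℝ 2 u (Icc a b)) (hv : ContDiffOn ℝ 2 v (Icc a b))
    (hu'' : ∀ t ∈ Icc a b, derivWithin (derivWithin u (Icc a b)) (Icc a b) t =
      A₀ t (u t) + A₁ t (derivWithin u (Icc a b) t) + f t)
    (hv'' : ∀ t ∈ Icc a b, derivWithin (derivWithin v (Icc a b)) (Icc a b) t =
      A₀ t (v t) + A₁ t (derivWithin v (Icc a b) t) + f t)
    (h₀ : u a = v a) (h₁ : derivWithin u (Icc a b) a = derivWithin v (Icc a b) a) :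
    EqOn u v (Icc a b) := fun _ ht ↦
  congrArg Prod.fst <| eqOn_Icc_of_hasDerivWithinAt_clm_apply_add (hA₀.companionOp hA₁)
    (hasDerivWithinAt_companionOp_of_derivWithin_derivWithin hab hu hu'')
    (hasDerivWithinAt_companionOp_of_derivWithin_derivWithin hab hv hv'') (Prod.ext h₀ h₁) ht

theorem exists_contDiffOn_derivWithin_derivWithin_eq [CompleteSpace X] (hab : a < b)
    (hA₀ : ContinuousOn A₀ (Icc a b)) (hA₁ : ContinuousOn A₁ (Icc a b))
    (hf : ContinuousOn f (Icc a b)) (u₀ u₁ : X) :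
    ∃ u : ℝ → X, ContDiffOn ℝ 2 u (Icc a b) ∧ u a = u₀ ∧ derivWithin u (Icc a b) a = u₁ ∧
      ∀ t ∈ Icc a b, derivWithin (derivWithin u (Icc a b)) (Icc a b) t =
        A₀ t (u t) + A₁ t (derivWithin u (Icc a b) t) + f t := by
  obtain ⟨α, hα₀, hα⟩ := exists_hasDerivWithinAt_Icc_clm_apply_add (hA₀.companionOp hA₁)
    (continuousOn_const.prodMk hf) (u₀, u₁)
  obtain ⟨hC2, hd, hd2⟩ := contDiffOn_fst_of_hasDerivWithinAt_companionOp hab hA₀ hA₁ hf hα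
  exact ⟨_, hC2, by simp [hα₀], by rw [hd a (left_mem_Icc.2 hab.le), hα₀], hd2⟩

end SecondOrderLinearODE

section SaddlePoint

variable {R : Type*} [CommRing R] {m n : Type*} [Fintype m] [Fintype n]

def saddleMap (M : Matrix m m R) (E : Matrix m n R) (G : Matrix n n R) :
    (m → R) × (n → R) →ₗ[R] (m → R) × (n → R) :=
  (M.mulVecLin.coprod E.mulVecLin).prod ((-Eᵀ.mulVecLin).coprod G.mulVecLin)

@[simp]
lemma saddleMap_apply (M : Matrix m m R) (E : Matrix m n R) (G : Matrix n n R)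
    (p : (m → R) × (n → R)) :
    saddleMap M E G p = (M *ᵥ p.1 + E *ᵥ p.2, -(Eᵀ *ᵥ p.1) + G *ᵥ p.2) :=
  rfl

lemma dotProduct_saddleMap (M : Matrix m m R) (E : Matrix m n R) (G : Matrix n n R)
    (p : (m → R) × (n → R)) :
    p.1 ⬝ᵥ (saddleMap M E G p).1 + p.2 ⬝ᵥ (saddleMap M E G p).2 =
      p.1 ⬝ᵥ M *ᵥ p.1 + p.2 ⬝ᵥ G *ᵥ p.2 := by
  have hskew : p.1 ⬝ᵥ E *ᵥ p.2 = p.2 ⬝ᵥ Eᵀ *ᵥ p.1 := by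
    rw [dotProduct_mulVec, mulVec_transpose, dotProduct_comm]
  simp only [saddleMap_apply, dotProduct_add, dotProduct_neg, hskew]
  ring

theorem saddleMap_injective [LinearOrder R] [IsStrictOrderedRing R] {M : Matrix m m R}
    {G : Matrix n n R} (E : Matrix m n R)
    (hM : ∀ x : m → R, x ≠ 0 → 0 < x ⬝ᵥ M *ᵥ x) (hG : ∀ x : n → R, x ≠ 0 → 0 < x ⬝ᵥ G *ᵥ x) :
    Function.Injective (saddleMap M E G) := by
  have hM' : ∀ x : m → R, 0 ≤ x ⬝ᵥ M *ᵥ x := fun x ↦ by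
    rcases eq_or_ne x 0 with rfl | hx
    exacts [by simp, (hM x hx).le]
  have hG' : ∀ x : n → R, 0 ≤ x ⬝ᵥ G *ᵥ x := fun x ↦ by
    rcases eq_or_ne x 0 with rfl | hx
    exacts [by simp, (hG x hx).le]
  rw [← LinearMap.ker_eq_bot, LinearMap.ker_eq_bot']
  intro p hp
  have hsum := dotProduct_saddleMap M E G p
  simp only [hp, Prod.fst_zero, Prod.snd_zero, dotProduct_zero, add_zero] at hsum
  have h₁ : p.1 = 0 := by
    by_contra h
    linarith [hM p.1 h, hG' p.2]
  have h₂ : p.2 = 0 := by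
    by_contra h
    linarith [hM' p.1, hG p.2 h]
  exact Prod.ext h₁ h₂

end SaddlePoint

section MatrixCLM

variable {𝕜 : Type*} [NontriviallyNormedField 𝕜] [CompleteSpace 𝕜] {m n : Type*} [Fintype n]

def Matrix.mulVecCLM (A : Matrix m n 𝕜) : (n → 𝕜) →L[𝕜] (m → 𝕜) :=
  LinearMap.toContinuousLinearMap A.mulVecLin

@[simp]
lemma Matrix.mulVecCLM_apply (A : Matrix m n 𝕜) (x : n → 𝕜) : A.mulVecCLM x = A *ᵥ x :=
  rfl

lemma Matrix.continuous_mulVecCLM [Fintype m] [DecidableEq n] :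
    Continuous (Matrix.mulVecCLM : Matrix m n 𝕜 → _) :=
  (LinearMap.toContinuousLinearMap.toLinearMap ∘ₗ Matrix.toLin'.toLinearMap :
    Matrix m n 𝕜 →ₗ[𝕜] (n → 𝕜) →L[𝕜] (m → 𝕜)).continuous_of_finiteDimensional

end MatrixCLM

section MatrixInverse

variable {R : Type*} {n : Type*} [Fintype n] [DecidableEq n]

lemma ContinuousOn.matrix_nonsing_inv [NormedCommRing R] [HasSummableGeomSeries R]
    {X : Type*} [TopologicalSpace X] {N : X → Matrix n n R} {s : Set X}
    (hN : ContinuousOn N s) (hunit : ∀ x ∈ s, IsUnit (N x)) :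
    ContinuousOn (fun x ↦ (N x)⁻¹) s := fun x hx ↦
  (continuousAt_matrix_inv _ (NormedRing.inverse_continuousAt
    ((isUnit_iff_isUnit_det _).1 (hunit x hx)).unit)).comp_continuousWithinAt (hN x hx)

lemma Matrix.mulVec_eq_iff_eq_nonsing_inv_mulVec [CommRing R] {N : Matrix n n R} (hN : IsUnit N)
    {x y : n → R} : N *ᵥ x = y ↔ x = N⁻¹ *ᵥ y := by
  have hdet := (isUnit_iff_isUnit_det N).1 hN
  constructor
  · rintro rfl
    rw [mulVec_mulVec, nonsing_inv_mul _ hdet, one_mulVec]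
  · rintro rfl
    rw [mulVec_mulVec, mul_nonsing_inv _ hdet, one_mulVec]

end MatrixInverse

section HDG

variable {n₁ n₂ n₃ : ℕ} {Mm : Matrix (Fin n₂) (Fin n₂) ℝ} {G : Matrix (Fin n₃) (Fin n₃) ℝ}
  {E : Matrix (Fin n₂) (Fin n₃) ℝ} (hsad : Function.Injective (saddleMap Mm E G))
  (B : Matrix (Fin n₂) (Fin n₁) ℝ) (S : Matrix (Fin n₁) (Fin n₁) ℝ)
  (F : Matrix (Fin n₁) (Fin n₃) ℝ)

def velocityTraceMap : (Fin n₁ → ℝ) × (Fin n₂ → ℝ) →L[ℝ] (Fin n₂ → ℝ) × (Fin n₃ → ℝ) :=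
  LinearMap.toContinuousLinearMap <| (LinearEquiv.ofInjectiveEndo _ hsad).symm.toLinearMap ∘ₗ
    (LinearMap.snd ℝ _ _ - B.mulVecLin ∘ₗ LinearMap.fst ℝ _ _).prod
      (-(Fᵀ.mulVecLin ∘ₗ LinearMap.fst ℝ _ _))

theorem eq_velocityTraceMap_iff {ψ : Fin n₁ → ℝ} {γ v : Fin n₂ → ℝ} {l : Fin n₃ → ℝ} :
    (v, l) = velocityTraceMap hsad B F (ψ, γ) ↔
      Mm *ᵥ v + B *ᵥ ψ + E *ᵥ l = γ ∧ -(Eᵀ *ᵥ v) + Fᵀ *ᵥ ψ + G *ᵥ l = 0 := by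
  rw [velocityTraceMap, LinearMap.coe_toContinuousLinearMap', LinearMap.comp_apply,
    LinearEquiv.coe_toLinearMap, LinearEquiv.eq_symm_apply, LinearEquiv.coe_ofInjectiveEndo,
    saddleMap_apply, Prod.ext_iff]
  simp only [LinearMap.prod_apply, Function.prod_apply, LinearMap.sub_apply, LinearMap.neg_apply,
    LinearMap.comp_apply, LinearMap.fst_apply, LinearMap.snd_apply, mulVecLin_apply]
  rw [eq_sub_iff_add_eq, add_right_comm, add_right_comm _ (Fᵀ *ᵥ ψ), add_eq_zero_iff_eq_neg]

def hdgCoupling (c : ℝ) : (Fin n₁ → ℝ) × (Fin n₂ → ℝ) →L[ℝ] (Fin n₁ → ℝ) :=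
  c ^ 2 • ((Bᵀ.mulVecCLM ∘L ContinuousLinearMap.fst ℝ _ _ -
      F.mulVecCLM ∘L ContinuousLinearMap.snd ℝ _ _) ∘L velocityTraceMap hsad B F -
    S.mulVecCLM ∘L ContinuousLinearMap.fst ℝ _ _)

lemma hdgCoupling_apply (c : ℝ) (p : (Fin n₁ → ℝ) × (Fin n₂ → ℝ)) :
    hdgCoupling hsad B S F c p = c ^ 2 • (Bᵀ *ᵥ (velocityTraceMap hsad B F p).1 -
      F *ᵥ (velocityTraceMap hsad B F p).2 - S *ᵥ p.1) := by
  simp [hdgCoupling]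

theorem hdg_second_eq_iff {c d : ℝ} {N : Matrix (Fin n₁) (Fin n₁) ℝ} (hN : IsUnit N)
    {ψ ψ' ψ'' φ : Fin n₁ → ℝ} {γ γ' v v' : Fin n₂ → ℝ} {l l' : Fin n₃ → ℝ}
    (hvl : (v, l) = velocityTraceMap hsad B F (ψ, γ))
    (hvl' : (v', l') = velocityTraceMap hsad B F (ψ', γ')) :
    N *ᵥ ψ'' - c ^ 2 • Bᵀ *ᵥ (v + d • v') + c ^ 2 • S *ᵥ (ψ + d • ψ') +
        c ^ 2 • F *ᵥ (l + d • l') = φ ↔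
      ψ'' = N⁻¹ *ᵥ (φ + hdgCoupling hsad B S F c ((ψ, γ) + d • (ψ', γ'))) := by
  rw [← Matrix.mulVec_eq_iff_eq_nonsing_inv_mulVec hN, hdgCoupling_apply, map_add, map_smul,
    ← hvl, ← hvl']
  simp only [Prod.fst_add, Prod.snd_add, Prod.smul_fst, Prod.smul_snd]
  constructor <;> intro h <;> linear_combination (norm := module) h

theorem derivWithin_velocityTrace {T : ℝ} (hT : 0 < T) {Ψ : ℝ → Fin n₁ → ℝ}
    {Γ V : ℝ → Fin n₂ → ℝ} {Λ : ℝ → Fin n₃ → ℝ} (hΨ : DifferentiableOn ℝ Ψ (Icc 0 T))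
    (hΓ : DifferentiableOn ℝ Γ (Icc 0 T))
    (hVΛ : ∀ t ∈ Icc 0 T, (V t, Λ t) = velocityTraceMap hsad B F (Ψ t, Γ t))
    {t : ℝ} (ht : t ∈ Icc 0 T) :
    (derivWithin V (Icc 0 T) t, derivWithin Λ (Icc 0 T) t) =
      velocityTraceMap hsad B F (derivWithin Ψ (Icc 0 T) t, derivWithin Γ (Icc 0 T) t) := by
  have hP : HasDerivWithinAt (fun s ↦ (V s, Λ s))
      (velocityTraceMap hsad B F (derivWithin Ψ (Icc 0 T) t, derivWithin Γ (Icc 0 T) t))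
      (Icc 0 T) t :=
    ((velocityTraceMap hsad B F).hasFDerivAt.comp_hasDerivWithinAt t
      ((hΨ t ht).hasDerivWithinAt.prodMk (hΓ t ht).hasDerivWithinAt)).congr_of_mem hVΛ ht
  ext1
  · exact ((ContinuousLinearMap.fst ℝ _ _).hasFDerivAt.comp_hasDerivWithinAt t hP).derivWithin
      (uniqueDiffOn_Icc hT t ht)
  · exact ((ContinuousLinearMap.snd ℝ _ _).hasFDerivAt.comp_hasDerivWithinAt t hP).derivWithin
      (uniqueDiffOn_Icc hT t ht)

def hdgReducedRHS (c δ T : ℝ) (N : ℝ → Matrix (Fin n₁) (Fin n₁) ℝ) (Φ : ℝ → Fin n₁ → ℝ)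
    (Γ : ℝ → Fin n₂ → ℝ) (t : ℝ) (ψ ψ' : Fin n₁ → ℝ) : Fin n₁ → ℝ :=
  (N t)⁻¹ *ᵥ (Φ t + hdgCoupling hsad B S F c
    ((ψ, Γ t) + (δ / c ^ 2) • (ψ', derivWithin Γ (Icc 0 T) t)))

theorem exists_continuousOn_hdgReducedRHS_eq {c δ T : ℝ} (hT : 0 < T)
    {N : ℝ → Matrix (Fin n₁) (Fin n₁) ℝ} (hN : ContinuousOn N (Icc 0 T))
    (hNunit : ∀ t ∈ Icc 0 T, IsUnit (N t)) {Φ : ℝ → Fin n₁ → ℝ} (hΦ : ContinuousOn Φ (Icc 0 T))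
    {Γ : ℝ → Fin n₂ → ℝ} (hΓ : ContDiffOn ℝ 1 Γ (Icc 0 T)) :
    ∃ (A₀ A₁ : ℝ → (Fin n₁ → ℝ) →L[ℝ] (Fin n₁ → ℝ)) (f : ℝ → Fin n₁ → ℝ),
      ContinuousOn A₀ (Icc 0 T) ∧ ContinuousOn A₁ (Icc 0 T) ∧ ContinuousOn f (Icc 0 T) ∧
      ∀ t ψ ψ', hdgReducedRHS hsad B S F c δ T N Φ Γ t ψ ψ' = A₀ t ψ + A₁ t ψ' + f t := by
  set Q := hdgCoupling hsad B S F c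
  set d := δ / c ^ 2
  set Γ' := derivWithin Γ (Icc 0 T)
  have hNinv := continuous_mulVecCLM.comp_continuousOn (hN.matrix_nonsing_inv hNunit)
  refine ⟨fun t ↦ (N t)⁻¹.mulVecCLM ∘L Q ∘L ContinuousLinearMap.inl ℝ _ _,
    fun t ↦ d • (N t)⁻¹.mulVecCLM ∘L Q ∘L ContinuousLinearMap.inl ℝ _ _,
    fun t ↦ (N t)⁻¹ *ᵥ (Φ t + Q (0, Γ t + d • Γ' t)),
    hNinv.clm_comp continuousOn_const, (hNinv.clm_comp continuousOn_const).const_smul d,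
    hNinv.clm_apply (hΦ.add (Q.continuous.comp_continuousOn (continuousOn_const.prodMk
      (hΓ.continuousOn.add ((hΓ.continuousOn_derivWithin (uniqueDiffOn_Icc hT) le_rfl).const_smul
        d))))), fun t ψ ψ' ↦ ?_⟩
  have hsplit : (ψ, Γ t) + d • (ψ', Γ' t) = ((ψ, 0) + d • (ψ', 0)) + (0, Γ t + d • Γ' t) := by
    ext1 <;> simp
  change (N t)⁻¹ *ᵥ (Φ t + Q ((ψ, Γ t) + d • (ψ', Γ' t))) = _
  rw [hsplit]
  simp only [map_add, map_smul, mulVec_add, mulVec_smul, ContinuousLinearMap.comp_apply,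
    ContinuousLinearMap.inl_apply, mulVecCLM_apply, _root_.smul_apply]
  abel

theorem solvesHDGODE_iff {c δ T : ℝ} (hT : 0 < T) {N : ℝ → Matrix (Fin n₁) (Fin n₁) ℝ}
    (hNunit : ∀ t ∈ Icc 0 T, IsUnit (N t)) {Φ : ℝ → Fin n₁ → ℝ} {Γ : ℝ → Fin n₂ → ℝ}
    (hΓ : ContDiffOn ℝ 1 Γ (Icc 0 T)) {Ψ0 Ψ1 : Fin n₁ → ℝ} {Ψ : ℝ → Fin n₁ → ℝ}
    {V : ℝ → Fin n₂ → ℝ} {Λ : ℝ → Fin n₃ → ℝ} :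
    SolvesHDGODE c δ T Mm G B E S F N Φ Γ Ψ0 Ψ1 Ψ V Λ ↔
      (ContDiffOn ℝ 2 Ψ (Icc 0 T) ∧ Ψ 0 = Ψ0 ∧ derivWithin Ψ (Icc 0 T) 0 = Ψ1 ∧
        ∀ t ∈ Icc 0 T, derivWithin (derivWithin Ψ (Icc 0 T)) (Icc 0 T) t =
          hdgReducedRHS hsad B S F c δ T N Φ Γ t (Ψ t) (derivWithin Ψ (Icc 0 T) t)) ∧
      ∀ t ∈ Icc 0 T, (V t, Λ t) = velocityTraceMap hsad B F (Ψ t, Γ t) := by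
  have hΓd : DifferentiableOn ℝ Γ (Icc 0 T) := hΓ.differentiableOn one_ne_zero
  constructor
  · rintro ⟨hΨ, -, -, heqs, hΨ0, hΨ1⟩
    have hVΛ : ∀ t ∈ Icc 0 T, (V t, Λ t) = velocityTraceMap hsad B F (Ψ t, Γ t) :=
      fun t ht ↦ (eq_velocityTraceMap_iff hsad B F).2 ⟨(heqs t ht).1, (heqs t ht).2.2⟩
    refine ⟨⟨hΨ, hΨ0, hΨ1, fun t ht ↦ ?_⟩, hVΛ⟩
    exact (hdg_second_eq_iff hsad B S F (hNunit t ht) (hVΛ t ht) (derivWithin_velocityTrace hsad B F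
      hT (hΨ.differentiableOn (by norm_num)) hΓd hVΛ ht)).1 (heqs t ht).2.1
  · rintro ⟨⟨hΨ, hΨ0, hΨ1, hΨ''⟩, hVΛ⟩
    have hVΛC1 : ContDiffOn ℝ 1 (fun t ↦ velocityTraceMap hsad B F (Ψ t, Γ t)) (Icc 0 T) :=
      (velocityTraceMap hsad B F).contDiff.comp_contDiffOn ((hΨ.of_le (by norm_num)).prodMk hΓ)
    refine ⟨hΨ, hVΛC1.fst.congr fun t ht ↦ congrArg Prod.fst (hVΛ t ht),
      hVΛC1.snd.congr fun t ht ↦ congrArg Prod.snd (hVΛ t ht), fun t ht ↦ ?_, hΨ0, hΨ1⟩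
    obtain ⟨h₁, h₃⟩ := (eq_velocityTraceMap_iff hsad B F).1 (hVΛ t ht)
    exact ⟨h₁, (hdg_second_eq_iff hsad B S F (hNunit t ht) (hVΛ t ht) (derivWithin_velocityTrace
      hsad B F hT (hΨ.differentiableOn (by norm_num)) hΓd hVΛ ht)).2 (hΨ'' t ht), h₃⟩

end HDG

theorem stmt_1_general (c δ T : ℝ) (hT : 0 < T)
    (n₁ n₂ n₃ : ℕ)
    (Mm : Matrix (Fin n₂) (Fin n₂) ℝ) (G : Matrix (Fin n₃) (Fin n₃) ℝ)
    (B : Matrix (Fin n₂) (Fin n₁) ℝ) (E : Matrix (Fin n₂) (Fin n₃) ℝ)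
    (S : Matrix (Fin n₁) (Fin n₁) ℝ) (F : Matrix (Fin n₁) (Fin n₃) ℝ)
    (hMpos : ∀ x : Fin n₂ → ℝ, x ≠ 0 → 0 < x ⬝ᵥ Mm.mulVec x)
    (hGpos : ∀ x : Fin n₃ → ℝ, x ≠ 0 → 0 < x ⬝ᵥ G.mulVec x)
    (N : ℝ → Matrix (Fin n₁) (Fin n₁) ℝ)
    (hNcont : ContinuousOn N (Icc 0 T))
    (hNinv : ∀ t ∈ Icc (0:ℝ) T, IsUnit (N t))
    (Φ : ℝ → Fin n₁ → ℝ) (hΦ : ContinuousOn Φ (Icc 0 T))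
    (Γ : ℝ → Fin n₂ → ℝ) (hΓ : ContDiffOn ℝ 1 Γ (Icc 0 T))
    (Ψ0 Ψ1 : Fin n₁ → ℝ) :
    ∃ (Ψ : ℝ → Fin n₁ → ℝ) (V : ℝ → Fin n₂ → ℝ) (Λ : ℝ → Fin n₃ → ℝ),
      SolvesHDGODE c δ T Mm G B E S F N Φ Γ Ψ0 Ψ1 Ψ V Λ ∧
      ∀ (Ψ' : ℝ → Fin n₁ → ℝ) (V' : ℝ → Fin n₂ → ℝ) (Λ' : ℝ → Fin n₃ → ℝ),
        SolvesHDGODE c δ T Mm G B E S F N Φ Γ Ψ0 Ψ1 Ψ' V' Λ' →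
        ∀ t ∈ Icc (0:ℝ) T, Ψ' t = Ψ t ∧ V' t = V t ∧ Λ' t = Λ t := by
  have hsad := saddleMap_injective E hMpos hGpos
  set P := velocityTraceMap hsad B F
  obtain ⟨A₀, A₁, f, hA₀, hA₁, hf, hRHS⟩ :=
    exists_continuousOn_hdgReducedRHS_eq hsad B S F (c := c) (δ := δ) hT hNcont hNinv hΦ hΓ
  obtain ⟨Ψ, hΨ, hΨ0, hΨ1, hΨ''⟩ :=
    exists_contDiffOn_derivWithin_derivWithin_eq hT hA₀ hA₁ hf Ψ0 Ψ1
  refine ⟨Ψ, fun t ↦ (P (Ψ t, Γ t)).1, fun t ↦ (P (Ψ t, Γ t)).2,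
    (solvesHDGODE_iff hsad B S F hT hNinv hΓ).2
      ⟨⟨hΨ, hΨ0, hΨ1, fun t ht ↦ (hΨ'' t ht).trans (hRHS _ _ _).symm⟩, fun _ _ ↦ rfl⟩, ?_⟩
  rintro Ψ' V' Λ' hsol t ht
  obtain ⟨⟨hΨ', hΨ'0, hΨ'1, hΨ'''⟩, hVΛ⟩ := (solvesHDGODE_iff hsad B S F hT hNinv hΓ).1 hsol
  have hΨeq : EqOn Ψ' Ψ (Icc 0 T) :=
    eqOn_of_derivWithin_derivWithin_eq hT hA₀ hA₁ hΨ' hΨ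
      (fun t ht ↦ (hΨ''' t ht).trans (hRHS _ _ _)) hΨ'' (hΨ'0.trans hΨ0.symm) (hΨ'1.trans hΨ1.symm)
  have hVΛt := hVΛ t ht
  rw [hΨeq ht] at hVΛt
  exact ⟨hΨeq ht, congrArg Prod.fst hVΛt, congrArg Prod.snd hVΛt⟩

/-- Existence and uniqueness of the solution to the ODE system coming from the linearized
semidiscrete HDG formulation. -/
theorem stmt_1 (c δ T : ℝ) (hc : 0 < c) (hδ : 0 ≤ δ) (hT : 0 < T)
    (n₁ n₂ n₃ : ℕ)
    (Mm : Matrix (Fin n₂) (Fin n₂) ℝ) (G : Matrix (Fin n₃) (Fin n₃) ℝ)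
    (B : Matrix (Fin n₂) (Fin n₁) ℝ) (E : Matrix (Fin n₂) (Fin n₃) ℝ)
    (S : Matrix (Fin n₁) (Fin n₁) ℝ) (F : Matrix (Fin n₁) (Fin n₃) ℝ)
    (hMsymm : Mm.IsSymm) (hMpos : ∀ x : Fin n₂ → ℝ, x ≠ 0 → 0 < x ⬝ᵥ Mm.mulVec x)
    (hGsymm : G.IsSymm) (hGpos : ∀ x : Fin n₃ → ℝ, x ≠ 0 → 0 < x ⬝ᵥ G.mulVec x)
    (N : ℝ → Matrix (Fin n₁) (Fin n₁) ℝ)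
    (hNcont : ContinuousOn N (Icc 0 T))
    (hNinv : ∀ t ∈ Icc (0:ℝ) T, IsUnit (N t))
    (Φ : ℝ → Fin n₁ → ℝ) (hΦ : ContinuousOn Φ (Icc 0 T))
    (Γ : ℝ → Fin n₂ → ℝ) (hΓ : ContDiffOn ℝ 1 Γ (Icc 0 T))
    (Ψ0 Ψ1 : Fin n₁ → ℝ) :
    ∃ (Ψ : ℝ → Fin n₁ → ℝ) (V : ℝ → Fin n₂ → ℝ) (Λ : ℝ → Fin n₃ → ℝ),
      SolvesHDGODE c δ T Mm G B E S F N Φ Γ Ψ0 Ψ1 Ψ V Λ ∧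
      ∀ (Ψ' : ℝ → Fin n₁ → ℝ) (V' : ℝ → Fin n₂ → ℝ) (Λ' : ℝ → Fin n₃ → ℝ),
        SolvesHDGODE c δ T Mm G B E S F N Φ Γ Ψ0 Ψ1 Ψ' V' Λ' →
        ∀ t ∈ Icc (0:ℝ) T, Ψ' t = Ψ t ∧ V' t = V t ∧ Λ' t = Λ t :=
  stmt_1_general c δ T hT n₁ n₂ n₃ Mm G B E S F hMpos hGpos N hNcont hNinv Φ hΦ Γ hΓ Ψ0 Ψ1
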